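/- The product of two associated Legendre polynomials P_ℓ^m(z) and P_{ℓ'}^{m'}(z) on [-1,1] can be written as a linear combination of associated Legendre polynomials P_{ℓ̃}^{m̃}(z) with degrees ℓ̃ ≤ ℓ + ℓ' and orders 0 ≤ m̃ ≤ ℓ̃. Equivalently, the function z ↦ P_ℓ^m(z)·P_{ℓ'}^{m'}(z) lies in the span of {P_{ℓ̃}^{m̃} : ℓ̃ ≤ ℓ+ℓ', 0 ≤ m̃ ≤ ℓ̃}. -/

import Mathlib

/-!
Writing `s = √(1 - z²)`, one has `P_ℓ^m(z) = (-s)^m · p(z)` with `p = P_ℓ^{(m)}` a polynomial of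
degree `ℓ - m`. Hence the product is `(-s)^(m + m') · q(z)` with `deg q ≤ ℓ + ℓ' - m - m'`. Put
`k = (m + m') % 2`; since `s² = 1 - z²` on `[-1, 1]`, the product is `(-s)^k` times a polynomial of
degree at most `ℓ + ℓ' - k`. The polynomials `P_l^{(k)}`, `k ≤ l ≤ ℓ + ℓ'`, have degrees exactly
`0, 1, …, ℓ + ℓ' - k`, so they span such polynomials, and `(-s)^k P_l^{(k)} = P_l^k`.
-/

open Real

/-- The Legendre polynomial `P_ℓ(z) = 1/(2^ℓ ℓ!) dℓ/dzℓ [(z²-1)^ℓ]`. -/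
noncomputable def legP (ℓ : ℕ) (z : ℝ) : ℝ :=
  (1 / (2 ^ ℓ * (Nat.factorial ℓ : ℝ))) *
    iteratedDeriv ℓ (fun y : ℝ => (y ^ 2 - 1) ^ ℓ) z

/-- The associated Legendre polynomial
`P_ℓ^m(z) = (-1)^m (1-z²)^{m/2} dᵐ/dzᵐ P_ℓ(z)` for `0 ≤ m ≤ ℓ`. -/
noncomputable def assocLegP (ℓ m : ℕ) (z : ℝ) : ℝ :=
  (-1 : ℝ) ^ m * (Real.sqrt (1 - z ^ 2)) ^ m * iteratedDeriv m (legP ℓ) z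

open Polynomial Finset

namespace Polynomial

protected theorem iteratedDeriv {𝕜 : Type*} [NontriviallyNormedField 𝕜] (p : 𝕜[X]) (n : ℕ) :
    iteratedDeriv n (fun x => p.eval x) = fun x => (derivative^[n] p).eval x := by
  induction n with
  | zero => simp
  | succ n ih =>
    ext x
    rw [iteratedDeriv_succ, ih, Function.iterate_succ_apply']
    exact Polynomial.deriv _

theorem degree_iterate_derivative_of_le {R : Type*} [Semiring R] [IsAddTorsionFree R] {p : R[X]}
    (hp : p ≠ 0) {k : ℕ} (hk : k ≤ p.natDegree) :
    (derivative^[k] p).degree = ↑(p.natDegree - k) := by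
  induction k with
  | zero => exact degree_eq_natDegree hp
  | succ k ih =>
    have hnat : (derivative^[k] p).natDegree = p.natDegree - k :=
      natDegree_eq_of_degree_eq_some (ih (by omega))
    rw [Function.iterate_succ_apply', degree_derivative (by omega), hnat, Nat.sub_sub]

theorem Sequence.exists_sum_eq_of_natDegree_le {K : Type*} [Field K] (S : Sequence K) {n : ℕ}
    {Q : K[X]} (hQ : Q.natDegree ≤ n) : ∃ b : ℕ → K, Q = ∑ i ∈ range (n + 1), b i • S i := by
  have hspan : Q ∈ Submodule.span K (S '' Set.Iic n) := by
    rw [S.span_degreeLE fun i _ => isUnit_iff_ne_zero.2 (leadingCoeff_ne_zero.2 (S.ne_zero i))]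
    exact mem_degreeLE.2 (degree_le_of_natDegree_le hQ)
  obtain ⟨b, hb, rfl⟩ := (Finsupp.mem_span_image_iff_linearCombination K).1 hspan
  refine ⟨b, Finsupp.sum_of_support_subset b (fun i hi => ?_) _ fun _ _ => zero_smul K _⟩
  simpa [Nat.lt_succ_iff] using hb hi

end Polynomial

noncomputable def legPoly (ℓ : ℕ) : ℝ[X] :=
  C (1 / (2 ^ ℓ * (ℓ.factorial : ℝ))) * derivative^[ℓ] ((X ^ 2 - 1) ^ ℓ)

theorem legP_eq_eval (ℓ : ℕ) : legP ℓ = fun z => (legPoly ℓ).eval z := by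
  ext z
  have hpow : (fun y : ℝ => (y ^ 2 - 1) ^ ℓ) = fun y => (((X : ℝ[X]) ^ 2 - 1) ^ ℓ).eval y := by
    simp
  simp [legP, legPoly, hpow, Polynomial.iteratedDeriv]

theorem degree_legPoly (ℓ : ℕ) : (legPoly ℓ).degree = ℓ := by
  have hmonic : ((X : ℝ[X]) ^ 2 - 1).Monic := monic_X_pow_sub_C 1 two_ne_zero
  have hdeg : (((X : ℝ[X]) ^ 2 - 1) ^ ℓ).natDegree = 2 * ℓ := by
    rw [hmonic.natDegree_pow, mul_comm]
    congr 1
    compute_degree!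
  have hc : (1 / (2 ^ ℓ * (ℓ.factorial : ℝ))) ≠ 0 := by positivity
  rw [legPoly, degree_C_mul hc,
    degree_iterate_derivative_of_le (hmonic.pow ℓ).ne_zero (by omega), hdeg]
  norm_cast
  omega

theorem natDegree_legPoly (ℓ : ℕ) : (legPoly ℓ).natDegree = ℓ :=
  natDegree_eq_of_degree_eq_some (degree_legPoly ℓ)

theorem legPoly_ne_zero (ℓ : ℕ) : legPoly ℓ ≠ 0 :=
  ne_zero_of_degree_gt (n := ⊥) (by simp [degree_legPoly])

noncomputable def legPolyDerivSequence (k : ℕ) : Sequence ℝ where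
  elems' i := derivative^[k] (legPoly (i + k))
  degree_eq' i := by
    rw [degree_iterate_derivative_of_le (legPoly_ne_zero _) (by simp [natDegree_legPoly]),
      natDegree_legPoly, Nat.add_sub_cancel]

theorem assocLegP_eq_eval (ℓ m : ℕ) (z : ℝ) :
    assocLegP ℓ m z = (-√(1 - z ^ 2)) ^ m * (derivative^[m] (legPoly ℓ)).eval z := by
  rw [assocLegP, legP_eq_eval, Polynomial.iteratedDeriv, neg_pow (√(1 - z ^ 2))]

theorem assocLegP_of_lt {ℓ m : ℕ} (h : ℓ < m) (z : ℝ) : assocLegP ℓ m z = 0 := by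
  rw [assocLegP_eq_eval, iterate_derivative_eq_zero (by rwa [natDegree_legPoly]), eval_zero,
    mul_zero]

theorem exists_sum_assocLegP_eq {k N : ℕ} {Q : ℝ[X]} (hQ : Q.natDegree + k ≤ N) :
    ∃ a : ℕ → ℝ, ∀ z, (-√(1 - z ^ 2)) ^ k * Q.eval z =
      ∑ l ∈ range (N + 1), a l * assocLegP l k z := by
  obtain ⟨b, rfl⟩ :=
    (legPolyDerivSequence k).exists_sum_eq_of_natDegree_le (n := N - k) (Q := Q) (by omega)
  refine ⟨fun l => b (l - k), fun z => ?_⟩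
  have hsplit : ∑ l ∈ range (N + 1), b (l - k) * assocLegP l k z =
      ∑ i ∈ range (N - k + 1), b i * assocLegP (i + k) k z := by
    rw [show N + 1 = k + (N - k + 1) by omega, sum_range_add,
      sum_eq_zero fun l hl => by rw [assocLegP_of_lt (mem_range.1 hl), mul_zero], zero_add]
    simp only [add_comm k, Nat.add_sub_cancel]
  rw [hsplit, eval_finsetSum, mul_sum]
  refine sum_congr rfl fun i _ => ?_
  rw [eval_smul, smul_eq_mul, assocLegP_eq_eval]
  simp only [legPolyDerivSequence]
  ring

noncomputable def assocLegMulPoly (ℓ ℓ' m m' : ℕ) : ℝ[X] :=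
  (1 - X ^ 2) ^ ((m + m') / 2) * derivative^[m] (legPoly ℓ) * derivative^[m'] (legPoly ℓ')

theorem natDegree_assocLegMulPoly_add_le {ℓ ℓ' m m' : ℕ} (hm : m ≤ ℓ) (hm' : m' ≤ ℓ') :
    (assocLegMulPoly ℓ ℓ' m m').natDegree + (m + m') % 2 ≤ ℓ + ℓ' := by
  have hquad : (1 - X ^ 2 : ℝ[X]).natDegree ≤ 2 := by compute_degree
  have hdeg := natDegree_mul_le_of_le (natDegree_mul_le_of_le
    (natDegree_pow_le_of_le ((m + m') / 2) hquad) (natDegree_iterate_derivative (legPoly ℓ) m))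
    (natDegree_iterate_derivative (legPoly ℓ') m')
  rw [natDegree_legPoly, natDegree_legPoly] at hdeg
  rw [assocLegMulPoly]
  omega

theorem assocLegP_mul_assocLegP {z : ℝ} (hz : z ∈ Set.Icc (-1 : ℝ) 1) (ℓ ℓ' m m' : ℕ) :
    assocLegP ℓ m z * assocLegP ℓ' m' z =
      (-√(1 - z ^ 2)) ^ ((m + m') % 2) * (assocLegMulPoly ℓ ℓ' m m').eval z := by
  have hsq : (-√(1 - z ^ 2)) ^ 2 = 1 - z ^ 2 := by
    rw [neg_sq, sq_sqrt (by nlinarith [hz.1, hz.2])]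
  have hpow : (-√(1 - z ^ 2)) ^ (m + m') =
      (-√(1 - z ^ 2)) ^ ((m + m') % 2) * (1 - z ^ 2) ^ ((m + m') / 2) := by
    calc _ = (-√(1 - z ^ 2)) ^ ((m + m') % 2 + 2 * ((m + m') / 2)) := by rw [Nat.mod_add_div]
      _ = _ := by rw [pow_add, pow_mul, hsq]
  rw [assocLegP_eq_eval, assocLegP_eq_eval, mul_mul_mul_comm, ← pow_add, hpow, assocLegMulPoly]
  simp only [eval_mul, eval_pow, eval_sub, eval_one, eval_X]
  ring

/-- The product of two associated Legendre polynomials on `[-1,1]` is a linear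
combination of associated Legendre polynomials `P_{ℓ̃}^{m̃}` with `ℓ̃ ≤ ℓ + ℓ'`,
`0 ≤ m̃ ≤ ℓ̃`. -/
theorem assocLegP_mul_mem_span (ℓ ℓ' m m' : ℕ) (hm : m ≤ ℓ) (hm' : m' ≤ ℓ') :
    ∃ c : ℕ → ℕ → ℝ, ∀ z ∈ Set.Icc (-1 : ℝ) 1,
      assocLegP ℓ m z * assocLegP ℓ' m' z =
        ∑ l ∈ Finset.range (ℓ + ℓ' + 1), ∑ k ∈ Finset.range (l + 1),
          c l k * assocLegP l k z := by
  set k := (m + m') % 2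
  obtain ⟨a, ha⟩ := exists_sum_assocLegP_eq (natDegree_assocLegMulPoly_add_le hm hm')
  refine ⟨fun l j => if j = k then a l else 0, fun z hz => ?_⟩
  rw [assocLegP_mul_assocLegP hz, ha]
  refine sum_congr rfl fun l _ => ?_
  simp only [ite_mul, zero_mul, sum_ite_eq', mem_range]
  split_ifs with hk
  · rfl
  · rw [assocLegP_of_lt (by omega), mul_zero]
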